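/- Fix ω ∈ ℂ with Im ω > 0 and λ ∈ ℂ with exp(-Im ω) < |λ| ≤ 1, and set μ = Log λ/(ω - conj(ω)) (principal complex logarithm) and α = i·Log λ/(2·Im ω), so that α = -μ. Let β : ℂ → ℂ be smooth and let f : ℂ → ℂ be smooth with f(z + 2π) = f(z), f(z + ω) = λ·f(z), and ∂_{z̄}f(z) + β(z)·conj(f(z)) = 0 for all z ∈ ℂ. Define g(z) = f(z)·exp(-μ·(z - conj(z))). Then g is doubly periodic, g(z + 2π) = g(z) and g(z + ω) = g(z) for all z, and g satisfies the equation ∂_{z̄}g(z) + α·g(z) + β̃(z)·conj(g(z)) = 0 for all z, where β̃(z) = β(z)·exp(-(μ + conj(μ))·(z - conj(z))); moreover |β̃(z)| = |β(z)| for all z. -/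

import Mathlib

open ComplexConjugate

/-- The Wirtinger derivative `∂_{z̄}f(z) = (1/2)(∂f/∂x(z) + i·∂f/∂y(z))`. -/
noncomputable def wirtingerZbar (f : ℂ → ℂ) (z : ℂ) : ℂ :=
  (1/2 : ℂ) * (fderiv ℝ f z 1 + Complex.I * fderiv ℝ f z Complex.I)

/-!
The factor `e(z) = exp(-μ(z - z̄))` absorbs the multiplier: `z - z̄ = 2i·Im z` is invariant under
real translations, while `exp(μ(ω - ω̄)) = λ` by the choice of `μ`. Since `∂_{z̄}(z - z̄) = -1`,
`∂_{z̄}e = μe`, which produces the constant zeroth-order term `μg = -αg`. Finally `conj e` differs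
from `e` by the factor `exp((μ + μ̄)(z - z̄))`, the exponential of a purely imaginary number, which
is absorbed into `β̃` without changing its modulus.
-/

namespace Complex

theorem add_ofReal_sub_conj (z : ℂ) (t : ℝ) : z + t - conj (z + t) = z - conj z := by
  rw [map_add, conj_ofReal]
  ring

theorem exp_mul_add_sub_conj (c z w : ℂ) :
    exp (c * (z + w - conj (z + w))) = exp (c * (z - conj z)) * exp (c * (w - conj w)) := by
  rw [← exp_add, map_add]
  ring_nf

theorem re_add_conj_mul_sub_conj (c z : ℂ) : ((c + conj c) * (z - conj z)).re = 0 := by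
  rw [add_conj, sub_conj]
  simp

theorem norm_exp_add_conj_mul_sub_conj (c z : ℂ) :
    ‖exp ((c + conj c) * (z - conj z))‖ = 1 := by
  rw [norm_exp, re_add_conj_mul_sub_conj, Real.exp_zero]

theorem conj_exp_mul_sub_conj (c z : ℂ) :
    conj (exp (c * (z - conj z))) = exp (-conj c * (z - conj z)) := by
  rw [← exp_conj, map_mul, map_sub, conj_conj]
  ring_nf

theorem exp_neg_add_conj_mul_sub_conj_mul_conj_exp (c z : ℂ) :
    exp (-(c + conj c) * (z - conj z)) * conj (exp (-c * (z - conj z))) =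
      exp (-c * (z - conj z)) := by
  rw [conj_exp_mul_sub_conj, ← exp_add, map_neg]
  ring_nf

theorem sub_conj_ne_zero {ω : ℂ} (hω : ω.im ≠ 0) : ω - conj ω ≠ 0 := by
  rw [sub_conj]
  exact mul_ne_zero (ofReal_ne_zero.mpr (mul_ne_zero two_ne_zero hω)) I_ne_zero

theorem I_mul_div_two_im {ω : ℂ} (hω : ω.im ≠ 0) (a : ℂ) :
    I * a / (2 * ω.im) = -(a / (ω - conj ω)) := by
  have := sub_conj_ne_zero hω
  rw [im_eq_sub_conj]
  field_simp
  linear_combination a * I_sq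

theorem exp_neg_log_div_sub_conj_mul {ω lam : ℂ} (hω : ω - conj ω ≠ 0) (hlam : lam ≠ 0) :
    exp (-(log lam / (ω - conj ω)) * (ω - conj ω)) = lam⁻¹ := by
  rw [neg_mul, div_mul_cancel₀ _ hω, exp_neg, exp_log hlam]

end Complex

section Wirtinger

open Complex

theorem wirtingerZbar_mul {f g : ℂ → ℂ} {z : ℂ} (hf : DifferentiableAt ℝ f z)
    (hg : DifferentiableAt ℝ g z) :
    wirtingerZbar (fun w => f w * g w) z = f z * wirtingerZbar g z + g z * wirtingerZbar f z := by
  simp only [wirtingerZbar, fderiv_fun_mul hf hg, add_apply, smul_apply, smul_eq_mul]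
  ring

theorem wirtingerZbar_cexp {h : ℂ → ℂ} {z : ℂ} (hh : DifferentiableAt ℝ h z) :
    wirtingerZbar (fun w => exp (h w)) z = exp (h z) * wirtingerZbar h z := by
  simp only [wirtingerZbar, hh.hasFDerivAt.cexp.fderiv, smul_apply, smul_eq_mul]
  ring

noncomputable def mulSubConjCLM (c : ℂ) : ℂ →L[ℝ] ℂ :=
  c • (ContinuousLinearMap.id ℝ ℂ - conjCLE.toContinuousLinearMap)

theorem coe_mulSubConjCLM (c : ℂ) : ⇑(mulSubConjCLM c) = fun w => c * (w - conj w) := by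
  ext w
  simp [mulSubConjCLM]

theorem wirtingerZbar_mul_sub_conj (c z : ℂ) :
    wirtingerZbar (fun w => c * (w - conj w)) z = -c := by
  rw [wirtingerZbar, ← coe_mulSubConjCLM, ContinuousLinearMap.fderiv, coe_mulSubConjCLM]
  simp only [conj_I, map_one]
  linear_combination c * I_sq

theorem wirtingerZbar_exp_mul_sub_conj (c z : ℂ) :
    wirtingerZbar (fun w => exp (c * (w - conj w))) z = -c * exp (c * (z - conj z)) := by
  rw [wirtingerZbar_cexp (by fun_prop), wirtingerZbar_mul_sub_conj, mul_comm]

end Wirtinger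

open Complex in
theorem constant_coefficient_linearized_equation_general
    (ω lam : ℂ) (hω : 0 < ω.im)
    (hlam1 : Real.exp (-ω.im) < ‖lam‖)
    (μ α : ℂ)
    (hμ : μ = Complex.log lam / (ω - conj ω))
    (hα : α = Complex.I * Complex.log lam / (2 * (ω.im : ℂ)))
    (β : ℂ → ℂ)
    (f : ℂ → ℂ) (hf : ContDiff ℝ (⊤ : ℕ∞) f)
    (hf1 : ∀ z, f (z + 2 * Real.pi) = f z)
    (hf2 : ∀ z, f (z + ω) = lam * f z)
    (hfeq : ∀ z, wirtingerZbar f z + β z * conj (f z) = 0) :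
    α = -μ ∧
    (∀ z, (fun w => f w * Complex.exp (-μ * (w - conj w))) (z + 2 * Real.pi)
      = (fun w => f w * Complex.exp (-μ * (w - conj w))) z) ∧
    (∀ z, (fun w => f w * Complex.exp (-μ * (w - conj w))) (z + ω)
      = (fun w => f w * Complex.exp (-μ * (w - conj w))) z) ∧
    (∀ z, wirtingerZbar (fun w => f w * Complex.exp (-μ * (w - conj w))) z
        + α * (f z * Complex.exp (-μ * (z - conj z)))
        + (β z * Complex.exp (-(μ + conj μ) * (z - conj z)))
          * conj (f z * Complex.exp (-μ * (z - conj z))) = 0) ∧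
    (∀ z, ‖β z * Complex.exp (-(μ + conj μ) * (z - conj z))‖
      = ‖β z‖) := by
  have hlam : lam ≠ 0 := norm_pos_iff.mp ((Real.exp_pos _).trans hlam1)
  have hαμ : α = -μ := by rw [hα, hμ, I_mul_div_two_im hω.ne']
  refine ⟨hαμ, fun z => ?_, fun z => ?_, fun z => ?_, fun z => ?_⟩
  · simp only [hf1]
    exact_mod_cast congrArg (fun u => f z * exp (-μ * u)) (add_ofReal_sub_conj z (2 * Real.pi))
  · dsimp only
    rw [exp_mul_add_sub_conj, hμ, exp_neg_log_div_sub_conj_mul (sub_conj_ne_zero hω.ne') hlam, ← hμ, hf2]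
    field_simp
  · rw [wirtingerZbar_mul (hf.differentiable (by simp) z) (DifferentiableAt.cexp (by fun_prop)),
      wirtingerZbar_exp_mul_sub_conj, map_mul, hαμ]
    linear_combination exp (-μ * (z - conj z)) * hfeq z
      + β z * conj (f z) * exp_neg_add_conj_mul_sub_conj_mul_conj_exp μ z
  · rw [norm_mul, neg_add, ← map_neg, norm_exp_add_conj_mul_sub_conj, mul_one]

/-- Proposition 6.5 of the paper: after the change of trivialization
`g(z) = f(z)·exp(-μ(z - z̄))`, a solution of `f_{z̄} + β·conj(f) = 0` with multiplier
`λ` becomes a doubly periodic solution of `g_{z̄} + α·g + β̃·conj(g) = 0` with constant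
coefficient `α = i·Log λ/(2 Im ω) = -μ` and `|β̃| = |β|`. -/
theorem constant_coefficient_linearized_equation
    (ω lam : ℂ) (hω : 0 < ω.im)
    (hlam1 : Real.exp (-ω.im) < ‖lam‖) (hlam2 : ‖lam‖ ≤ 1)
    (μ α : ℂ)
    (hμ : μ = Complex.log lam / (ω - conj ω))
    (hα : α = Complex.I * Complex.log lam / (2 * (ω.im : ℂ)))
    (β : ℂ → ℂ) (hβ : ContDiff ℝ (⊤ : ℕ∞) β)
    (f : ℂ → ℂ) (hf : ContDiff ℝ (⊤ : ℕ∞) f)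
    (hf1 : ∀ z, f (z + 2 * Real.pi) = f z)
    (hf2 : ∀ z, f (z + ω) = lam * f z)
    (hfeq : ∀ z, wirtingerZbar f z + β z * conj (f z) = 0) :
    α = -μ ∧
    (∀ z, (fun w => f w * Complex.exp (-μ * (w - conj w))) (z + 2 * Real.pi)
      = (fun w => f w * Complex.exp (-μ * (w - conj w))) z) ∧
    (∀ z, (fun w => f w * Complex.exp (-μ * (w - conj w))) (z + ω)
      = (fun w => f w * Complex.exp (-μ * (w - conj w))) z) ∧
    (∀ z, wirtingerZbar (fun w => f w * Complex.exp (-μ * (w - conj w))) z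
        + α * (f z * Complex.exp (-μ * (z - conj z)))
        + (β z * Complex.exp (-(μ + conj μ) * (z - conj z)))
          * conj (f z * Complex.exp (-μ * (z - conj z))) = 0) ∧
    (∀ z, ‖β z * Complex.exp (-(μ + conj μ) * (z - conj z))‖
      = ‖β z‖) :=
  constant_coefficient_linearized_equation_general ω lam hω hlam1 μ α hμ hα β f hf hf1 hf2 hfeq
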